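/- Fix an integer s ≥ 1. Let M be the free R-module on generators x2, y2, x1_1, …, x1_s, y1_1, …, y1_s, x0, and let d : M → M be the R-linear map with d(x2) = U·y2 + U·y1_1; d(x1_j) = U²·y1_j + U·y1_{j+1} for 1 ≤ j ≤ s−1; d(x1_s) = U²·y1_s + x0; and d = 0 on y2, all y1_j, and x0. Then d ∘ d = 0, and the quotient of the homology H = ker d / im d by its U-torsion submodule is a free R-module of rank 1, generated by the image of the class of y2. -/

import Mathlib

/-!
The functional `towerCoord` (`y2 ↦ 1`, `y1 s j ↦ U ^ j`, `x0 ↦ U ^ (s + 1)`, `x`'s `↦ 0`) kills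
every boundary in characteristic 2, so it induces a map `H → R` that kills `U`-torsion and sends
`[y2]` to `1`: this gives injectivity. Conversely, a cycle has no `x`-components (read off the
`x0`- and `y1`-coordinates of `d k = 0`, going down from `x1_s`), while `U • (y1 s j + U ^ j • y2)`
and `x0 + U ^ (s + 1) • y2` are boundaries; hence `U • (k - towerCoord k • y2)` is a boundary for
every cycle `k`, i.e. `[k] = towerCoord k • [y2]` modulo torsion.
-/

noncomputable section

/-- `R = 𝔽₂[U]`, the polynomial ring in one variable over the field with two elements. -/
abbrev R : Type := Polynomial (ZMod 2)

/-- The variable `U` of `R = 𝔽₂[U]`. -/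
def U : R := Polynomial.X

/-- The free `R`-module on the generators `x2, y2, x0` (indexed by `Fin 3`),
`x1_1, …, x1_s` (the first `Fin s` factor) and `y1_1, …, y1_s` (the second `Fin s`
factor). -/
abbrev M (s : ℕ) : Type := (Fin 3 ⊕ Fin s ⊕ Fin s) → R

def x2 (s : ℕ) : M s := Pi.single (Sum.inl 0) 1
def y2 (s : ℕ) : M s := Pi.single (Sum.inl 1) 1
def x0 (s : ℕ) : M s := Pi.single (Sum.inl 2) 1
/-- `x1 s j` is the generator `x1_{j+1}` (so `j : Fin s` is the 0-based index). -/
def x1 (s : ℕ) (j : Fin s) : M s := Pi.single (Sum.inr (Sum.inl j)) 1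
/-- `y1 s j` is the generator `y1_{j+1}` (so `j : Fin s` is the 0-based index). -/
def y1 (s : ℕ) (j : Fin s) : M s := Pi.single (Sum.inr (Sum.inr j)) 1

section TorsionFreeHomology

variable {A N : Type*} [CommRing A] [AddCommGroup N] [Module A N]

abbrev homologyOf (d : N →ₗ[A] N) : Type _ :=
  LinearMap.ker d ⧸ (LinearMap.range d).comap (LinearMap.ker d).subtype

def homologyLift (d : N →ₗ[A] N) (φ : N →ₗ[A] A) (hφ : φ ∘ₗ d = 0) : homologyOf d →ₗ[A] A :=
  Submodule.liftQ _ (φ ∘ₗ (LinearMap.ker d).subtype) <| by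
    rintro ⟨_, _⟩ ⟨n, rfl⟩
    exact LinearMap.congr_fun hφ n

theorem Submodule.torsion'_le_ker_of_le_nonZeroDivisors {Q : Type*} [AddCommGroup Q]
    [Module A Q] {S : Submonoid A} (hS : S ≤ nonZeroDivisors A) (f : Q →ₗ[A] A) :
    Submodule.torsion' A Q S ≤ LinearMap.ker f := by
  rintro m ⟨u, hu⟩
  have hfm : f m * u = 0 := by
    rw [mul_comm, ← smul_eq_mul, ← map_smul, ← Submonoid.smul_def, hu, map_zero]
  exact (mem_nonZeroDivisors_iff_right.mp (hS u.2)) _ hfm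

theorem bijective_toSpanSingleton_homology_quot_torsion (d : N →ₗ[A] N) (S : Submonoid A)
    (hS : S ≤ nonZeroDivisors A) (φ : N →ₗ[A] A) (hφ : φ ∘ₗ d = 0) (z : LinearMap.ker d)
    (hφz : φ z = 1)
    (hgen : ∀ k ∈ LinearMap.ker d, ∃ u ∈ S, ∃ r : A, u • (k - r • (z : N)) ∈ LinearMap.range d) :
    Function.Bijective (LinearMap.toSpanSingleton A
      (homologyOf d ⧸ Submodule.torsion' A (homologyOf d) S)
      (Submodule.Quotient.mk (Submodule.Quotient.mk z))) := by
  set ψ := Submodule.liftQ _ (homologyLift d φ hφ)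
    (Submodule.torsion'_le_ker_of_le_nonZeroDivisors hS _)
  constructor
  · refine Function.LeftInverse.injective (g := ψ) fun r => ?_
    simp [ψ, homologyLift, hφz]
  · intro q
    obtain ⟨h, rfl⟩ := Submodule.Quotient.mk_surjective _ q
    obtain ⟨⟨k, hk⟩, rfl⟩ := Submodule.Quotient.mk_surjective _ h
    obtain ⟨u, hu, r, hr⟩ := hgen k hk
    refine ⟨r, Eq.symm <| (Submodule.Quotient.eq _).mpr ⟨⟨u, hu⟩, ?_⟩⟩
    change u • (Submodule.Quotient.mk (⟨k, hk⟩ : LinearMap.ker d) - r • Submodule.Quotient.mk z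
      : homologyOf d) = 0
    rw [← Submodule.Quotient.mk_smul, ← Submodule.Quotient.mk_sub,
      ← Submodule.Quotient.mk_smul, Submodule.Quotient.mk_eq_zero]
    exact hr

end TorsionFreeHomology

theorem U_ne_zero : U ≠ 0 := Polynomial.X_ne_zero

theorem eq_sum_generators {s : ℕ} (k : M s) :
    k = k (Sum.inl 0) • x2 s + k (Sum.inl 1) • y2 s + k (Sum.inl 2) • x0 s
      + ∑ j, k (Sum.inr (Sum.inl j)) • x1 s j + ∑ j, k (Sum.inr (Sum.inr j)) • y1 s j := by
  conv_lhs => rw [pi_eq_sum_univ' k]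
  rw [Fintype.sum_sum_type, Fintype.sum_sum_type, Fin.sum_univ_three, ← add_assoc]
  rfl

def towerCoord (s : ℕ) : M s →ₗ[R] R :=
  LinearMap.proj (Sum.inl 1) + ∑ j : Fin s, U ^ (j : ℕ) • LinearMap.proj (Sum.inr (Sum.inr j))
    + U ^ (s + 1) • LinearMap.proj (Sum.inl 2)

@[simp] theorem towerCoord_y2 (s : ℕ) : towerCoord s (y2 s) = 1 := by simp [towerCoord, y2]
@[simp] theorem towerCoord_x0 (s : ℕ) : towerCoord s (x0 s) = U ^ (s + 1) := by
  simp [towerCoord, x0]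
@[simp] theorem towerCoord_y1 (s : ℕ) (j : Fin s) : towerCoord s (y1 s j) = U ^ (j : ℕ) := by
  simp [towerCoord, y1, Pi.single_apply]

structure IsUnstableChainDifferential (s : ℕ) (hs : 1 ≤ s) (d : M s →ₗ[R] M s) : Prop where
  apply_x2 : d (x2 s) = U • y2 s + U • y1 s ⟨0, hs⟩
  apply_x1 : ∀ j : Fin s, ∀ h : (j : ℕ) + 1 < s,
    d (x1 s j) = (U ^ 2) • y1 s j + U • y1 s ⟨(j : ℕ) + 1, h⟩
  apply_x1_last : d (x1 s ⟨s - 1, Nat.sub_lt hs Nat.one_pos⟩)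
    = (U ^ 2) • y1 s ⟨s - 1, Nat.sub_lt hs Nat.one_pos⟩ + x0 s
  apply_y2 : d (y2 s) = 0
  apply_y1 : ∀ j : Fin s, d (y1 s j) = 0
  apply_x0 : d (x0 s) = 0

namespace IsUnstableChainDifferential

variable {s : ℕ} {hs : 1 ≤ s} {d : M s →ₗ[R] M s}

theorem apply_x1_of_succ_eq (hd : IsUnstableChainDifferential s hs d) {j : Fin s}
    (hj : (j : ℕ) + 1 = s) : d (x1 s j) = (U ^ 2) • y1 s j + x0 s := by
  obtain rfl : j = ⟨s - 1, Nat.sub_lt hs Nat.one_pos⟩ := Fin.ext (by simp; omega)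
  exact hd.apply_x1_last

theorem apply_eq (hd : IsUnstableChainDifferential s hs d) (k : M s) :
    d k = k (Sum.inl 0) • d (x2 s) + ∑ j, k (Sum.inr (Sum.inl j)) • d (x1 s j) := by
  conv_lhs => rw [eq_sum_generators k]
  simp [map_sum, hd.apply_y2, hd.apply_x0, hd.apply_y1]

theorem comp_self (hd : IsUnstableChainDifferential s hs d) : d ∘ₗ d = 0 := by
  have hx1 : ∀ j, d (d (x1 s j)) = 0 := fun j => by
    by_cases hj : (j : ℕ) + 1 < s
    · simp [hd.apply_x1 j hj, hd.apply_y1]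
    · simp [hd.apply_x1_of_succ_eq (by omega : (j : ℕ) + 1 = s), hd.apply_y1, hd.apply_x0]
  refine LinearMap.ext fun k => ?_
  simp [hd.apply_eq k, map_sum, hx1, hd.apply_x2, hd.apply_y2, hd.apply_y1]

theorem apply_x1_apply_y2 (hd : IsUnstableChainDifferential s hs d) (i : Fin s) :
    d (x1 s i) (Sum.inl 1) = 0 := by
  by_cases hi : (i : ℕ) + 1 < s
  · simp [hd.apply_x1 i hi, y1]
  · simp [hd.apply_x1_of_succ_eq (by omega : (i : ℕ) + 1 = s), y1, x0]

theorem apply_x1_apply_x0 (hd : IsUnstableChainDifferential s hs d) (i : Fin s) {j : Fin s}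
    (hj : (j : ℕ) + 1 = s) : d (x1 s i) (Sum.inl 2) = if i = j then 1 else 0 := by
  by_cases hi : (i : ℕ) + 1 < s
  · have hij : i ≠ j := Fin.ne_of_val_ne (by omega)
    simp [hd.apply_x1 i hi, y1, hij]
  · obtain rfl : i = j := Fin.ext (by omega)
    simp [hd.apply_x1_of_succ_eq hj, y1, x0]

theorem apply_x1_apply_y1_succ (hd : IsUnstableChainDifferential s hs d) (i : Fin s) {j : ℕ}
    (hj : j + 1 < s) : d (x1 s i) (Sum.inr (Sum.inr ⟨j + 1, hj⟩)) =
      (if i = ⟨j + 1, hj⟩ then U ^ 2 else 0) + (if i = ⟨j, by omega⟩ then U else 0) := by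
  by_cases hi : (i : ℕ) + 1 < s
  · simp [hd.apply_x1 i hi, y1, Pi.single_apply, Fin.ext_iff, eq_comm]
  · have hij : i ≠ ⟨j, by omega⟩ := Fin.ne_of_val_ne (by simp only; omega)
    simp [hd.apply_x1_of_succ_eq (by omega : (i : ℕ) + 1 = s), y1, x0, Pi.single_apply, hij,
      eq_comm]

theorem apply_apply_y2 (hd : IsUnstableChainDifferential s hs d) (k : M s) :
    d k (Sum.inl 1) = k (Sum.inl 0) * U := by
  simp [hd.apply_eq k, hd.apply_x1_apply_y2, hd.apply_x2, y1, y2]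

theorem apply_apply_x0 (hd : IsUnstableChainDifferential s hs d) (k : M s) {j : Fin s}
    (hj : (j : ℕ) + 1 = s) : d k (Sum.inl 2) = k (Sum.inr (Sum.inl j)) := by
  simp [hd.apply_eq k, hd.apply_x1_apply_x0 _ hj, hd.apply_x2, y1, y2]

theorem apply_apply_y1_succ (hd : IsUnstableChainDifferential s hs d) (k : M s) {j : ℕ}
    (hj : j + 1 < s) : d k (Sum.inr (Sum.inr ⟨j + 1, hj⟩)) =
      k (Sum.inr (Sum.inl ⟨j + 1, hj⟩)) * U ^ 2 + k (Sum.inr (Sum.inl ⟨j, by omega⟩)) * U := by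
  simp [hd.apply_eq k, hd.apply_x1_apply_y1_succ _ hj, hd.apply_x2, y1, y2,
    mul_add, Finset.sum_add_distrib]

theorem coeff_x2_eq_zero_of_mem_ker (hd : IsUnstableChainDifferential s hs d) {k : M s}
    (hk : k ∈ LinearMap.ker d) : k (Sum.inl 0) = 0 := by
  have h := hd.apply_apply_y2 k
  rw [LinearMap.mem_ker.mp hk] at h
  exact (mul_eq_zero.mp h.symm).resolve_right U_ne_zero

theorem coeff_x1_eq_zero_of_mem_ker (hd : IsUnstableChainDifferential s hs d) {k : M s}
    (hk : k ∈ LinearMap.ker d) (j : Fin s) : k (Sum.inr (Sum.inl j)) = 0 := by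
  rw [LinearMap.mem_ker] at hk
  suffices ∀ m (hm : m ≤ s) (hlt : m < s), k (Sum.inr (Sum.inl ⟨m, hlt⟩)) = 0 from
    this j j.isLt.le j.isLt
  intro m hm
  induction hm using Nat.decreasingInduction with
  | self => exact fun h => absurd h (lt_irrefl s)
  | of_succ i hi ih =>
    intro _
    by_cases hi' : i + 1 < s
    · have h := hd.apply_apply_y1_succ k hi'
      rw [hk, ih hi'] at h
      simpa [U_ne_zero] using h.symm
    · rw [← hd.apply_apply_x0 k (j := ⟨i, hi⟩) (by simp; omega), hk]
      rfl

theorem towerCoord_comp (hd : IsUnstableChainDifferential s hs d) : towerCoord s ∘ₗ d = 0 := by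
  have hx2 : towerCoord s (d (x2 s)) = 0 := by
    simp only [hd.apply_x2, map_add, map_smul, towerCoord_y2, towerCoord_y1, smul_eq_mul]
    linear_combination CharTwo.two_eq_zero (R := R) * U
  have hx1 : ∀ j, towerCoord s (d (x1 s j)) = 0 := fun j => by
    by_cases hj : (j : ℕ) + 1 < s
    · simp only [hd.apply_x1 j hj, map_add, map_smul, towerCoord_y1, smul_eq_mul]
      linear_combination CharTwo.two_eq_zero (R := R) * U ^ ((j : ℕ) + 2)
    · have hj : (j : ℕ) + 1 = s := by omega
      simp only [hd.apply_x1_of_succ_eq hj, map_add, map_smul, towerCoord_y1, towerCoord_x0,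
        smul_eq_mul, ← hj]
      linear_combination CharTwo.two_eq_zero (R := R) * U ^ ((j : ℕ) + 2)
  refine LinearMap.ext fun k => ?_
  simp [hd.apply_eq k, hx1, hx2]

theorem U_smul_y1_add_mem_range (hd : IsUnstableChainDifferential s hs d) (j : ℕ) (hj : j < s) :
    U • y1 s ⟨j, hj⟩ + U ^ (j + 1) • y2 s ∈ LinearMap.range d := by
  induction j with
  | zero => exact ⟨x2 s, by rw [hd.apply_x2, zero_add, pow_one, add_comm]⟩
  | succ j ih =>
    have hj' : j < s := by omega
    convert add_mem (LinearMap.mem_range_self d (x1 s ⟨j, hj'⟩))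
      (Submodule.smul_mem _ U (ih hj')) using 1
    rw [hd.apply_x1 _ hj]
    linear_combination (norm := module) CharTwo.two_eq_zero (R := R) • (-(U ^ 2) • y1 s ⟨j, hj'⟩)

theorem x0_add_mem_range (hd : IsUnstableChainDifferential s hs d) :
    x0 s + U ^ (s + 1) • y2 s ∈ LinearMap.range d := by
  have hL : s - 1 < s := Nat.sub_lt hs Nat.one_pos
  convert add_mem (LinearMap.mem_range_self d (x1 s ⟨s - 1, hL⟩))
    (Submodule.smul_mem _ U (hd.U_smul_y1_add_mem_range _ hL)) using 1
  rw [hd.apply_x1_last, Nat.sub_add_cancel hs]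
  linear_combination (norm := module) CharTwo.two_eq_zero (R := R) • (-(U ^ 2) • y1 s ⟨s - 1, hL⟩)

theorem U_smul_sub_towerCoord_mem_range (hd : IsUnstableChainDifferential s hs d) {k : M s}
    (hk : k ∈ LinearMap.ker d) : U • (k - towerCoord s k • y2 s) ∈ LinearMap.range d := by
  let P := (LinearMap.range d).comap (U • (LinearMap.id - (towerCoord s).smulRight (y2 s)))
  have mem_P : ∀ m, U • (m - towerCoord s m • y2 s) ∈ LinearMap.range d → m ∈ P := fun _ => id
  suffices k ∈ P from this
  rw [eq_sum_generators k]
  simp only [hd.coeff_x2_eq_zero_of_mem_ker hk, hd.coeff_x1_eq_zero_of_mem_ker hk, zero_smul,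
    zero_add, Finset.sum_const_zero, add_zero]
  refine add_mem (add_mem (P.smul_mem _ ?_) (P.smul_mem _ ?_)) (sum_mem fun j _ => P.smul_mem _ ?_)
  · exact mem_P _ (by simp)
  · refine mem_P _ ?_
    convert Submodule.smul_mem _ U hd.x0_add_mem_range using 1
    rw [towerCoord_x0]
    linear_combination (norm := module) CharTwo.two_eq_zero (R := R) • (-U ^ (s + 2) • y2 s)
  · refine mem_P _ ?_
    convert hd.U_smul_y1_add_mem_range j j.isLt using 1
    rw [towerCoord_y1]
    linear_combination (norm := module) CharTwo.two_eq_zero (R := R) • (-U ^ ((j : ℕ) + 1) • y2 s)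

end IsUnstableChainDifferential

/-- Fix `s ≥ 1`.  Let `M` be the free `R`-module on the generators
`x2, y2, x1_1, …, x1_s, y1_1, …, y1_s, x0`, and let `d : M → M` be the `R`-linear map with
`d x2 = U • y2 + U • y1_1`; `d x1_j = U² • y1_j + U • y1_{j+1}` for `1 ≤ j ≤ s - 1`;
`d x1_s = U² • y1_s + x0`; and `d = 0` on `y2`, all `y1_j`, and `x0`.  Then `d ∘ d = 0`,
and the quotient of the homology `H = ker d / im d` by its `U`-torsion submodule is a free
`R`-module of rank one generated by the image of the class of `y2`, i.e. the map
`r ↦ r • [[y2]]` from `R` to that quotient is bijective. -/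
theorem homology_mod_torsion_free_rank_one (s : ℕ) (hs : 1 ≤ s) (d : M s →ₗ[R] M s)
    (hx2 : d (x2 s) = U • y2 s + U • y1 s ⟨0, hs⟩)
    (hx1 : ∀ j : Fin s, ∀ h : (j : ℕ) + 1 < s,
      d (x1 s j) = (U ^ 2) • y1 s j + U • y1 s ⟨(j : ℕ) + 1, h⟩)
    (hx1s : d (x1 s ⟨s - 1, Nat.sub_lt hs Nat.one_pos⟩)
      = (U ^ 2) • y1 s ⟨s - 1, Nat.sub_lt hs Nat.one_pos⟩ + x0 s)
    (hy2 : d (y2 s) = 0)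
    (hy1 : ∀ j : Fin s, d (y1 s j) = 0) (hx0 : d (x0 s) = 0) :
    d ∘ₗ d = 0 ∧
    ∃ hz : y2 s ∈ LinearMap.ker d,
      Function.Bijective
        (LinearMap.toSpanSingleton R
          ((LinearMap.ker d ⧸ (LinearMap.range d).comap (LinearMap.ker d).subtype) ⧸
            Submodule.torsion' R
              (LinearMap.ker d ⧸ (LinearMap.range d).comap (LinearMap.ker d).subtype)
              (Submonoid.powers U))
          (Submodule.Quotient.mk (Submodule.Quotient.mk ⟨y2 s, hz⟩))) := by
  have hd : IsUnstableChainDifferential s hs d := ⟨hx2, hx1, hx1s, hy2, hy1, hx0⟩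
  refine ⟨hd.comp_self, LinearMap.mem_ker.mpr hy2, ?_⟩
  exact bijective_toSpanSingleton_homology_quot_torsion d (Submonoid.powers U)
    (powers_le_nonZeroDivisors_of_noZeroDivisors U_ne_zero) (towerCoord s) hd.towerCoord_comp
    ⟨y2 s, _⟩ (towerCoord_y2 s)
    fun k hk => ⟨U, Submonoid.mem_powers U, _, hd.U_smul_sub_towerCoord_mem_range hk⟩
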